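/- arXiv:2309.10590 — 2 statements merged into one kernel-verified Lean document; each statement's English description precedes it below -/
import Mathlib

section
/- Let B and W be disjoint finsets of a type α with decidable equality, and let S ⊆ B ∪ W. Then at least one of the four finsets S, S ∆ B, S ∆ W, S ∆ (B ∪ W) has cardinality at most half of |B ∪ W|; i.e., there exists T ∈ {S, S ∆ B, S ∆ W, S ∆ (B ∪ W)} with 2·|T| ≤ |B ∪ W|. -/
open scoped symmDiff

theorem Finset.two_mul_card_le_or_two_mul_card_sdiff_le {α : Type*} [DecidableEq α]
    {s u : Finset α} (h : s ⊆ u) : 2 * s.card ≤ u.card ∨ 2 * (u \ s).card ≤ u.card := by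
  have := Finset.card_sdiff_add_card_eq_card h
  omega

theorem exists_bw_complement_small_general {α : Type*} [DecidableEq α]
    (B W S : Finset α) (hS : S ⊆ B ∪ W) :
    ∃ T ∈ ({S, S ∆ B, S ∆ W, S ∆ (B ∪ W)} : Set (Finset α)),
      2 * T.card ≤ (B ∪ W).card := by
  rcases Finset.two_mul_card_le_or_two_mul_card_sdiff_le hS with hS_small | hcompl_small
  · exact ⟨S, by simp, hS_small⟩
  · refine ⟨S ∆ (B ∪ W), by simp, ?_⟩
    rwa [symmDiff_of_le hS]

theorem exists_bw_complement_small {α : Type*} [DecidableEq α]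
    (B W S : Finset α) (hBW : Disjoint B W) (hS : S ⊆ B ∪ W) :
    ∃ T ∈ ({S, S ∆ B, S ∆ W, S ∆ (B ∪ W)} : Set (Finset α)),
      2 * T.card ≤ (B ∪ W).card :=
  exists_bw_complement_small_general B W S hS
end

section
/- Let B and W be disjoint finsets of a type α with decidable equality, and let S ⊆ B ∪ W. If 2·|S ∩ B| ≠ |B| or 2·|S ∩ W| ≠ |W| (i.e., S is not equilibrium), then there exists T ∈ {S, S ∆ B, S ∆ W, S ∆ (B ∪ W)} with 2·|T| < |B ∪ W|. -/
/-!
Write `a = #(S ∩ B)` and `b = #(S ∩ W)`, so that `#S = a + b`. The four BW-complements have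
sizes `a + b`, `(#B - a) + b`, `a + (#W - b)` and `(#B - a) + (#W - b)`, which add up to
`2 * #(B ∪ W)`. If none of them were smaller than half of `#(B ∪ W)`, all four would equal it,
and comparing the first with the second and the third gives `2 * a = #B` and `2 * b = #W`.
-/

open scoped symmDiff

namespace Finset

variable {α : Type*} [DecidableEq α]

theorem card_symmDiff_add_two_mul_card_inter (s t : Finset α) :
    #(s ∆ t) + 2 * #(s ∩ t) = #s + #t := by
  rw [symmDiff_eq_sup_sdiff_inf, sup_eq_union, inf_eq_inter,
    card_sdiff_of_subset inter_subset_union, ← card_union_add_card_inter]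
  have := card_le_card (inter_subset_union (s := s) (t := t))
  omega

theorem card_eq_card_inter_add_card_inter {s t u : Finset α} (htu : Disjoint t u)
    (hs : s ⊆ t ∪ u) : #s = #(s ∩ t) + #(s ∩ u) := by
  rw [← card_union_of_disjoint (htu.mono inter_subset_right inter_subset_right),
    ← inter_union_distrib_left, inter_eq_left.2 hs]

end Finset

theorem exists_bw_complement_lt_of_not_equilibrium {α : Type*} [DecidableEq α]
    (B W S : Finset α) (hBW : Disjoint B W) (hS : S ⊆ B ∪ W)
    (h : 2 * (S ∩ B).card ≠ B.card ∨ 2 * (S ∩ W).card ≠ W.card) :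
    ∃ T ∈ ({S, S ∆ B, S ∆ W, S ∆ (B ∪ W)} : Set (Finset α)),
      2 * T.card < (B ∪ W).card := by
  have hS_card := Finset.card_eq_card_inter_add_card_inter hBW hS
  have hB := Finset.card_symmDiff_add_two_mul_card_inter S B
  have hW := Finset.card_symmDiff_add_two_mul_card_inter S W
  have hU := Finset.card_symmDiff_add_two_mul_card_inter S (B ∪ W)
  rw [Finset.inter_eq_left.2 hS] at hU
  rw [Finset.card_union_of_disjoint hBW] at hU ⊢
  by_contra! hge
  have h₁ := hge S (by simp)
  have h₂ := hge (S ∆ B) (by simp)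
  have h₃ := hge (S ∆ W) (by simp)
  have h₄ := hge (S ∆ (B ∪ W)) (by simp)
  omega
end
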